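/- arXiv:0905.1012 — 2 statements merged into one kernel-verified Lean document; each statement's English description precedes it below -/
import Mathlib

section
/- Let B be a Banach space and C : B → B a bounded linear operator such that ‖(1 - sC) b‖ ≥ ‖b‖ for all s ∈ ℝ and b ∈ B. Then the operator C² generates a contraction semigroup, i.e. ‖exp(t C²)‖ ≤ 1 for all t ≥ 0. -/
set_option maxHeartbeats 1000000
set_option synthInstance.maxHeartbeats 400000

open NormedSpace Filter

lemma exp_sub_geom_norm_le' {A : Type*} [NormedRing A] [NormedAlgebra ℝ A] [CompleteSpace A]
    (x : A) (h : ‖x‖ < 1) :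
    ‖exp x - ∑' n : ℕ, x ^ n‖ ≤ ‖x‖ ^ 2 / (1 - ‖x‖) := by
  have hs1 : Summable fun n : ℕ => ((n.factorial : ℝ)⁻¹) • x ^ n := expSeries_summable' x
  have hs2 : Summable fun n : ℕ => x ^ n := summable_geometric_of_norm_lt_one h
  have hexp : exp x = ∑' n : ℕ, ((n.factorial : ℝ)⁻¹) • x ^ n := by rw [exp_eq_tsum ℝ]
  set g : ℕ → ℝ := fun n => if n < 2 then 0 else ‖x‖ ^ n with hg_def
  have hx0 : (0:ℝ) ≤ ‖x‖ := norm_nonneg x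
  have hgsum : Summable g := by
    apply Summable.of_nonneg_of_le (fun n => ?_) (fun n => ?_)
      (summable_geometric_of_lt_one hx0 h)
    · by_cases hn : n ≤ 1 <;> simp [hg_def, hn, pow_nonneg hx0]
    · by_cases hn : n ≤ 1 <;> simp [hg_def, hn, pow_nonneg hx0]
  have hterm : ∀ n : ℕ, ‖((n.factorial : ℝ)⁻¹) • x ^ n - x ^ n‖ ≤ g n := by
    intro n
    match n with
    | 0 => simp [hg_def]
    | 1 => simp [hg_def]
    | (m+2) =>
      have h1 : ((m+2).factorial : ℝ)⁻¹ ≤ 1 := by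
        rw [inv_le_one_iff₀]; right; exact_mod_cast Nat.one_le_iff_ne_zero.2 (Nat.factorial_ne_zero _)
      have h0 : (0:ℝ) < ((m+2).factorial : ℝ)⁻¹ := by positivity
      have : ((m+2:ℕ).factorial : ℝ)⁻¹ • x ^ (m+2) - x ^ (m+2) = (((m+2:ℕ).factorial : ℝ)⁻¹ - 1) • x ^ (m+2) := by
        rw [sub_smul, one_smul]
      rw [this, norm_smul]
      have : ‖((m+2:ℕ).factorial : ℝ)⁻¹ - 1‖ ≤ 1 := by
        rw [Real.norm_eq_abs, abs_le]; constructor <;> nlinarith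
      calc ‖((m+2:ℕ).factorial : ℝ)⁻¹ - 1‖ * ‖x ^ (m+2)‖ ≤ 1 * ‖x‖ ^ (m+2) := by
            exact mul_le_mul this (norm_pow_le' x (Nat.succ_pos _)) (norm_nonneg _) one_pos.le
        _ = g (m+2) := by simp [hg_def]
  have hnorm : ‖∑' n : ℕ, (((n.factorial : ℝ)⁻¹) • x ^ n - x ^ n)‖ ≤ ∑' n, g n :=
    tsum_of_norm_bounded hgsum.hasSum hterm
  have htsum_g : ∑' n, g n = ‖x‖ ^ 2 / (1 - ‖x‖) := by
    rw [Summable.tsum_eq_zero_add hgsum, Summable.tsum_eq_zero_add ((summable_nat_add_iff 1).2 hgsum)]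
    have : ∀ n : ℕ, g (n + 1 + 1) = ‖x‖ ^ 2 * ‖x‖ ^ n := by
      intro n; simp only [hg_def]; rw [if_neg (by omega)]; ring
    simp only [this]
    rw [tsum_mul_left, tsum_geometric_of_lt_one hx0 h]
    simp [hg_def, div_eq_mul_inv]
  rw [hexp, ← Summable.tsum_sub hs1 hs2]
  rw [htsum_g] at hnorm
  exact hnorm

/-- If the bounded operator `C` is dissipative in both directions
(`‖(1 - s • C) b‖ ≥ ‖b‖` for all real `s` and all `b`), then `C²` generates a contraction
semigroup: `‖exp (t • C²)‖ ≤ 1` for all `t ≥ 0`. -/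
theorem stmt_2 {B : Type*} [NormedAddCommGroup B] [NormedSpace ℝ B] [CompleteSpace B]
    (C : B →L[ℝ] B) (hC : ∀ s : ℝ, ∀ b : B, ‖b‖ ≤ ‖((1 : B →L[ℝ] B) - s • C) b‖) :
    ∀ t : ℝ, 0 ≤ t → ‖exp (t • (C ^ 2))‖ ≤ 1 := by
  intro t ht
  set S : B →L[ℝ] B := C ^ 2 with hS
  -- `S` is dissipative
  have h2 : ∀ β : ℝ, 0 ≤ β → ∀ b : B, ‖b‖ ≤ ‖((1 : B →L[ℝ] B) - β • S) b‖ := by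
    intro β hβ b
    set s := Real.sqrt β with hs
    have hss : s * s = β := Real.mul_self_sqrt hβ
    have key : ((1 : B →L[ℝ] B) - s • C) * ((1 : B →L[ℝ] B) - (-s) • C)
        = (1 : B →L[ℝ] B) - β • S := by
      rw [hS, ← hss]
      simp only [sub_mul, mul_sub, mul_add, add_mul, one_mul, mul_one, neg_smul, smul_neg,
        neg_neg, smul_mul_assoc, mul_smul_comm, smul_smul, pow_two, mul_neg, sub_neg_eq_add]
      module
    calc ‖b‖ ≤ ‖((1 : B →L[ℝ] B) - (-s) • C) b‖ := hC (-s) b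
      _ ≤ ‖((1 : B →L[ℝ] B) - s • C) (((1 : B →L[ℝ] B) - (-s) • C) b)‖ := hC s _
      _ = ‖((1 : B →L[ℝ] B) - β • S) b‖ := by
          rw [← ContinuousLinearMap.mul_apply, key]
  -- the resolvents have norm at most `1`
  have h3 : ∀ β : ℝ, 0 ≤ β → ∀ hlt : ‖β • S‖ < 1,
      ‖(∑' k : ℕ, (β • S) ^ k : B →L[ℝ] B)‖ ≤ 1 := by
    intro β hβ hlt
    set u : (B →L[ℝ] B)ˣ := Units.oneSub (β • S) hlt with hu
    have hinv : ((u⁻¹ : (B →L[ℝ] B)ˣ) : B →L[ℝ] B) = ∑' k : ℕ, (β • S) ^ k := rfl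
    rw [← hinv]
    refine ContinuousLinearMap.opNorm_le_bound _ zero_le_one fun b => ?_
    have hb : ((1 : B →L[ℝ] B) - β • S) (((u⁻¹ : (B →L[ℝ] B)ˣ) : B →L[ℝ] B) b) = b := by
      rw [← ContinuousLinearMap.mul_apply]
      have hval : ((1 : B →L[ℝ] B) - β • S) = (u : B →L[ℝ] B) := rfl
      rw [hval, u.mul_inv]
      simp
    calc ‖((u⁻¹ : (B →L[ℝ] B)ˣ) : B →L[ℝ] B) b‖
        ≤ ‖((1 : B →L[ℝ] B) - β • S) (((u⁻¹ : (B →L[ℝ] B)ˣ) : B →L[ℝ] B) b)‖ := h2 β hβ _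
      _ = ‖b‖ := by rw [hb]
      _ ≤ 1 * ‖b‖ := by rw [one_mul]
  set c : ℝ := 2 * (t * ‖S‖) ^ 2 with hc
  have hc0 : 0 ≤ c := by positivity
  -- the key eventual bound
  have hkey : ∀ᶠ n : ℕ in atTop, ‖exp (t • S)‖ ≤ Real.exp (c / n) := by
    have htend : Tendsto (fun n : ℕ => (t * ‖S‖) / n) atTop (nhds 0) :=
      tendsto_const_div_atTop_nhds_zero_nat _
    filter_upwards [htend.eventually_lt_const (by norm_num : (0:ℝ) < 1/2),
      eventually_ge_atTop 1] with n hn1 hn2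
    have hn0 : (0:ℝ) < n := by exact_mod_cast hn2
    set x : B →L[ℝ] B := (t / n) • S with hx
    have hxnorm : ‖x‖ ≤ t * ‖S‖ / n := by
      rw [hx, norm_smul (t / (n:ℝ)) S, Real.norm_eq_abs, abs_of_nonneg (by positivity),
        div_mul_eq_mul_div]
    have hxhalf : ‖x‖ < 1/2 := lt_of_le_of_lt hxnorm hn1
    have hx1 : ‖x‖ < 1 := by linarith
    have hgeo : ‖(∑' k : ℕ, x ^ k : B →L[ℝ] B)‖ ≤ 1 := h3 (t / n) (by positivity) (hx ▸ hx1)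
    have hexp_le : ‖exp x‖ ≤ 1 + 2 * ‖x‖ ^ 2 := by
      have hd := exp_sub_geom_norm_le' x hx1
      have hdd : ‖x‖ ^ 2 / (1 - ‖x‖) ≤ 2 * ‖x‖ ^ 2 := by
        rw [div_le_iff₀ (by linarith)]
        nlinarith [sq_nonneg ‖x‖, norm_nonneg x]
      calc ‖exp x‖ = ‖(∑' k : ℕ, x ^ k) + (exp x - ∑' k : ℕ, x ^ k)‖ := by
            congr 1; abel
        _ ≤ ‖(∑' k : ℕ, x ^ k : B →L[ℝ] B)‖ + ‖exp x - ∑' k : ℕ, x ^ k‖ := norm_add_le _ _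
        _ ≤ 1 + 2 * ‖x‖ ^ 2 := by linarith
    have hsmul : n • x = t • S := by
      rw [hx, ← Nat.cast_smul_eq_nsmul ℝ, smul_smul]
      congr 1
      field_simp
    have hsq : ‖x‖ ^ 2 ≤ (t * ‖S‖ / n) ^ 2 := pow_le_pow_left₀ (norm_nonneg x) hxnorm 2
    calc ‖exp (t • S)‖ = ‖(exp x) ^ n‖ := by
          letI : NormedAlgebra ℚ (B →L[ℝ] B) := NormedAlgebra.restrictScalars ℚ ℝ (B →L[ℝ] B)
          rw [← hsmul, exp_nsmul]
      _ ≤ ‖exp x‖ ^ n := norm_pow_le' _ (by omega)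
      _ ≤ (1 + 2 * ‖x‖ ^ 2) ^ n := by
          apply pow_le_pow_left₀ (norm_nonneg _) hexp_le
      _ ≤ (Real.exp (2 * ‖x‖ ^ 2)) ^ n := by
          apply pow_le_pow_left₀ (by positivity)
          linarith [Real.add_one_le_exp (2 * ‖x‖ ^ 2)]
      _ = Real.exp (n * (2 * ‖x‖ ^ 2)) := (Real.exp_nat_mul _ n).symm
      _ ≤ Real.exp (c / n) := by
          apply Real.exp_le_exp.2
          calc (n : ℝ) * (2 * ‖x‖ ^ 2) ≤ (n : ℝ) * (2 * (t * ‖S‖ / n) ^ 2) := by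
                apply mul_le_mul_of_nonneg_left (by linarith) hn0.le
            _ = c / n := by rw [hc]; field_simp
  have hlim : Tendsto (fun n : ℕ => Real.exp (c / n)) atTop (nhds 1) := by
    have := (Real.continuous_exp.tendsto 0).comp (tendsto_const_div_atTop_nhds_zero_nat c)
    simpa [Function.comp_def] using this
  exact ge_of_tendsto hlim hkey
end

section
/- Let A and B be bounded linear operators on a Banach space X, each generating a one-parameter group of isometries (‖exp(tA)x‖ = ‖x‖ and ‖exp(tB)x‖ = ‖x‖ for all t ∈ ℝ, x ∈ X). Then the commutator C = AB - BA also generates a one-parameter group of isometries on X. -/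
/-!
Let `G s = exp (s A) exp (s B) exp (-s A) exp (-s B)`, an isometry. With `x = exp (s A)` and
`y = exp (s B)` we have `G s - 1 = (x y - y x) x⁻¹ y⁻¹` and
`x y - y x = (x - 1) (y - 1) - (y - 1) (x - 1)`, so the derivative of `exp` at `0` gives
`(G s - 1) / s² → C = A B - B A`. Hence `n (G √(t/n) - 1) → t C`, and Chernoff's product
formula (comparing with `exp (t C / n) ^ n` through `‖Pⁿ - Qⁿ‖ ≤ n M ‖P - Q‖`) shows that the
isometries `G √(t/n) ^ n` converge to `exp (t C)` in operator norm. Exchanging `A` and `B`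
replaces `C` by `-C`, which covers negative `t`.
-/

open NormedSpace Filter Topology

section BanachAlgebra

variable {𝔸 : Type*} [NormedRing 𝔸]

theorem norm_pow_sub_pow_le {P Q : 𝔸} {M : ℝ} (n : ℕ) (hP : ∀ k < n, ‖P ^ k‖ ≤ M)
    (hQ : ‖Q‖ ≤ 1) : ‖P ^ n - Q ^ n‖ ≤ n * M * ‖P - Q‖ := by
  induction n with
  | zero => simp
  | succ n ih =>
    have h_split : P ^ (n + 1) - Q ^ (n + 1) = P ^ n * (P - Q) + (P ^ n - Q ^ n) * Q := by
      noncomm_ring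
    calc ‖P ^ (n + 1) - Q ^ (n + 1)‖
        ≤ ‖P ^ n‖ * ‖P - Q‖ + ‖P ^ n - Q ^ n‖ * ‖Q‖ := by
          rw [h_split]
          exact (norm_add_le _ _).trans (add_le_add (norm_mul_le _ _) (norm_mul_le _ _))
      _ ≤ M * ‖P - Q‖ + n * M * ‖P - Q‖ := by
          refine add_le_add (by gcongr; exact hP n n.lt_succ_self) ?_
          exact (mul_le_of_le_one_right (norm_nonneg _) hQ).trans
            (ih fun k hk => hP k (hk.trans n.lt_succ_self))
      _ = (n + 1 : ℕ) * M * ‖P - Q‖ := by push_cast; ring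

variable [NormedAlgebra ℝ 𝔸] [CompleteSpace 𝔸]

theorem tendsto_smul_exp_smul_sub_one (a : 𝔸) :
    Tendsto (fun s : ℝ => s⁻¹ • (exp (s • a) - 1)) (𝓝[≠] 0) (𝓝 a) := by
  simpa using hasDerivAt_iff_tendsto_slope_zero.1 (hasDerivAt_exp_smul_const (𝕂 := ℝ) a 0)

theorem exp_smul_mul_exp_neg_smul (a : 𝔸) (s : ℝ) : exp (s • a) * exp ((-s) • a) = 1 := by
  let +nondep : NormedAlgebra ℚ 𝔸 := .restrictScalars ℚ ℝ 𝔸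
  rw [← exp_add_of_commute (((Commute.refl a).smul_left s).smul_right (-s)), ← add_smul,
    add_neg_cancel, zero_smul, exp_zero]

theorem exp_smul_pow (a : 𝔸) (s : ℝ) (k : ℕ) : exp (s • a) ^ k = exp ((k * s) • a) := by
  let +nondep : NormedAlgebra ℚ 𝔸 := .restrictScalars ℚ ℝ 𝔸
  rw [← exp_nsmul, ← Nat.cast_smul_eq_nsmul ℝ, smul_smul]

theorem tendsto_pow_exp_of_tendsto_smul_sub_one {Q : ℕ → 𝔸} {c : 𝔸} (hQ : ∀ n, ‖Q n‖ ≤ 1)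
    (hc : Tendsto (fun n : ℕ => (n : ℝ) • (Q n - 1)) atTop (𝓝 c)) :
    Tendsto (fun n => Q n ^ n) atTop (𝓝 (exp c)) := by
  obtain ⟨M, hM⟩ : ∃ M, ∀ s ∈ Set.Icc (0 : ℝ) 1, ‖exp (s • c)‖ ≤ M :=
    isCompact_Icc.exists_bound_of_continuousOn
      (differentiable_exp_smul_const ℝ c).continuous.continuousOn
  have hinv : Tendsto (fun n : ℕ => (n : ℝ)⁻¹) atTop (𝓝[≠] 0) :=
    tendsto_nhdsWithin_iff.2 ⟨tendsto_inv_atTop_zero.comp tendsto_natCast_atTop_atTop,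
      eventually_atTop.2 ⟨1, fun n hn => inv_ne_zero (by positivity)⟩⟩
  have hP : Tendsto (fun n : ℕ => (n : ℝ) • (exp ((n : ℝ)⁻¹ • c) - 1)) atTop (𝓝 c) := by
    simpa [Function.comp_def] using (tendsto_smul_exp_smul_sub_one c).comp hinv
  have hdiff := (hP.sub hc).norm.const_mul M
  rw [sub_self, norm_zero, mul_zero] at hdiff
  rw [tendsto_iff_norm_sub_tendsto_zero]
  refine squeeze_zero' (Eventually.of_forall fun _ => norm_nonneg _) ?_ hdiff
  filter_upwards [eventually_ge_atTop 1] with n hn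
  have hn' : (n : ℝ) ≠ 0 := by positivity
  have hpow : ∀ k : ℕ, exp ((n : ℝ)⁻¹ • c) ^ k = exp ((k / n : ℝ) • c) := fun k => by
    rw [exp_smul_pow, div_eq_mul_inv]
  calc ‖Q n ^ n - exp c‖ = ‖exp ((n : ℝ)⁻¹ • c) ^ n - Q n ^ n‖ := by
        rw [norm_sub_rev, hpow, div_self hn', one_smul]
    _ ≤ n * M * ‖exp ((n : ℝ)⁻¹ • c) - Q n‖ := by
        refine norm_pow_sub_pow_le n (fun k hk => ?_) (hQ n)
        rw [hpow]
        exact hM _ ⟨by positivity, div_le_one_of_le₀ (by exact_mod_cast hk.le) (by positivity)⟩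
    _ = M * ‖(n : ℝ) • (exp ((n : ℝ)⁻¹ • c) - 1) - (n : ℝ) • (Q n - 1)‖ := by
        rw [← smul_sub, sub_sub_sub_cancel_right, norm_smul, Real.norm_natCast]
        ring

noncomputable def expCommutator (a b : 𝔸) (s : ℝ) : 𝔸 :=
  exp (s • a) * exp (s • b) * exp ((-s) • a) * exp ((-s) • b)

theorem inv_sq_smul_expCommutator_sub_one (a b : 𝔸) (s : ℝ) :
    (s ^ 2)⁻¹ • (expCommutator a b s - 1) =
      ((s⁻¹ • (exp (s • a) - 1)) * (s⁻¹ • (exp (s • b) - 1))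
        - (s⁻¹ • (exp (s • b) - 1)) * (s⁻¹ • (exp (s • a) - 1)))
        * (exp ((-s) • a) * exp ((-s) • b)) := by
  set x := exp (s • a)
  set y := exp (s • b)
  have hx : x * exp ((-s) • a) = 1 := exp_smul_mul_exp_neg_smul a s
  have hy : y * exp ((-s) • b) = 1 := exp_smul_mul_exp_neg_smul b s
  have h_comm :
      expCommutator a b s - 1 = (x * y - y * x) * (exp ((-s) • a) * exp ((-s) • b)) := by
    have h1 : y * x * (exp ((-s) • a) * exp ((-s) • b)) = 1 := by
      rw [mul_assoc, ← mul_assoc x, hx, one_mul, hy]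
    rw [sub_mul, h1, expCommutator, mul_assoc (x * y)]
  rw [h_comm, smul_mul_smul_comm, smul_mul_smul_comm, ← smul_sub, ← inv_pow, sq,
    ← smul_mul_assoc]
  congr 2
  noncomm_ring

theorem tendsto_inv_sq_smul_expCommutator_sub_one (a b : 𝔸) :
    Tendsto (fun s : ℝ => (s ^ 2)⁻¹ • (expCommutator a b s - 1)) (𝓝[≠] 0)
      (𝓝 (a * b - b * a)) := by
  have hinv : Tendsto (fun s : ℝ => exp ((-s) • a) * exp ((-s) • b)) (𝓝[≠] 0) (𝓝 1) := by
    have h : Continuous (fun s : ℝ => exp ((-s) • a) * exp ((-s) • b)) :=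
      ((differentiable_exp_smul_const ℝ a).continuous.comp continuous_neg).mul
        ((differentiable_exp_smul_const ℝ b).continuous.comp continuous_neg)
    simpa using (h.tendsto 0).mono_left nhdsWithin_le_nhds
  have hA := tendsto_smul_exp_smul_sub_one a
  have hB := tendsto_smul_exp_smul_sub_one b
  simpa [inv_sq_smul_expCommutator_sub_one] using ((hA.mul hB).sub (hB.mul hA)).mul hinv

theorem tendsto_smul_expCommutator_sqrt_sub_one (a b : 𝔸) {t : ℝ} (ht : 0 < t) :
    Tendsto (fun n : ℕ => (n : ℝ) • (expCommutator a b √(t / n) - 1)) atTop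
      (𝓝 (t • (a * b - b * a))) := by
  have hs : Tendsto (fun n : ℕ => √(t / n)) atTop (𝓝[≠] 0) := by
    refine tendsto_nhdsWithin_iff.2 ⟨?_, eventually_atTop.2 ⟨1, fun n hn => ?_⟩⟩
    · simpa only [Function.comp_def, Real.sqrt_zero] using
        (Real.continuous_sqrt.tendsto 0).comp (tendsto_const_div_atTop_nhds_zero_nat t)
    · have : (0 : ℝ) < n := by exact_mod_cast hn
      exact (Real.sqrt_pos.2 (by positivity)).ne'
  refine ((tendsto_inv_sq_smul_expCommutator_sub_one a b).comp hs |>.const_smul t).congr' ?_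
  filter_upwards [eventually_ge_atTop 1] with n hn
  have : (0 : ℝ) < n := by exact_mod_cast hn
  rw [Function.comp_apply, smul_smul, Real.sq_sqrt (by positivity)]
  field_simp

end BanachAlgebra

section Operators

variable {X : Type*} [NormedAddCommGroup X] [NormedSpace ℝ X]

theorem norm_pow_apply_of_norm_apply {T : X →L[ℝ] X} (hT : ∀ x, ‖T x‖ = ‖x‖) (n : ℕ) (x : X) :
    ‖(T ^ n) x‖ = ‖x‖ := by
  induction n with
  | zero => simp
  | succ n ih => rw [pow_succ', mul_apply_eq_comp, hT, ih]

theorem norm_expCommutator_apply {A B : X →L[ℝ] X}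
    (hA : ∀ t : ℝ, ∀ x : X, ‖exp (t • A) x‖ = ‖x‖)
    (hB : ∀ t : ℝ, ∀ x : X, ‖exp (t • B) x‖ = ‖x‖) (s : ℝ) (x : X) :
    ‖expCommutator A B s x‖ = ‖x‖ := by
  simp only [expCommutator, mul_apply_eq_comp, hA, hB]

theorem norm_exp_smul_commutator_apply_of_pos [CompleteSpace X] {A B : X →L[ℝ] X}
    (hA : ∀ t : ℝ, ∀ x : X, ‖exp (t • A) x‖ = ‖x‖)
    (hB : ∀ t : ℝ, ∀ x : X, ‖exp (t • B) x‖ = ‖x‖) {t : ℝ} (ht : 0 < t) (x : X) :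
    ‖exp (t • (A * B - B * A)) x‖ = ‖x‖ := by
  set Q : ℕ → X →L[ℝ] X := fun n => expCommutator A B √(t / n)
  have hQ : ∀ n, ‖Q n‖ ≤ 1 := fun n =>
    ContinuousLinearMap.opNorm_le_bound _ zero_le_one fun y => by
      rw [norm_expCommutator_apply hA hB, one_mul]
  have h_lim : Tendsto (fun n => (Q n ^ n) x) atTop (𝓝 (exp (t • (A * B - B * A)) x)) :=
    ((ContinuousLinearMap.apply ℝ X x).continuous.tendsto _).comp
      (tendsto_pow_exp_of_tendsto_smul_sub_one hQ
        (tendsto_smul_expCommutator_sqrt_sub_one A B ht))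
  refine tendsto_nhds_unique h_lim.norm ?_
  exact tendsto_const_nhds.congr fun n =>
    (norm_pow_apply_of_norm_apply (norm_expCommutator_apply hA hB _) n x).symm

end Operators

/-- If the bounded operators `A` and `B` each generate a one-parameter group of isometries
on a Banach space `X`, then so does their commutator `A * B - B * A`. -/
theorem stmt_3 {X : Type*} [NormedAddCommGroup X] [NormedSpace ℝ X] [CompleteSpace X]
    (A B : X →L[ℝ] X)
    (hA : ∀ t : ℝ, ∀ x : X, ‖exp (t • A) x‖ = ‖x‖)
    (hB : ∀ t : ℝ, ∀ x : X, ‖exp (t • B) x‖ = ‖x‖) :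
    ∀ t : ℝ, ∀ x : X, ‖exp (t • (A * B - B * A)) x‖ = ‖x‖ := by
  intro t x
  rcases lt_trichotomy t 0 with ht | rfl | ht
  · have h_swap : t • (A * B - B * A) = (-t) • (B * A - A * B) := by
      rw [neg_smul, ← smul_neg, neg_sub]
    rw [h_swap]
    exact norm_exp_smul_commutator_apply_of_pos hB hA (neg_pos.2 ht) x
  · simp
  · exact norm_exp_smul_commutator_apply_of_pos hA hB ht x
end
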